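/- Let d ≥ 1, β > 0, σ > 0, let x ∼ N(0, I_d) and ε ∼ N(0, σ²) be independent, let Δ ∈ ℝ^d with Δ ≠ 0, and let v ∈ ℝ^d with ‖v‖₂ = 1. Writing a = ⟨Δ, v⟩/‖Δ‖₂ and ρ = (1+βσ²)/(1+β(σ²+‖Δ‖₂²)), one has E[ ⟨x, v⟩² · exp(−(β/2)(⟨Δ, x⟩ + ε)²) ] = (1/√(1+βσ²))·( a²·ρ^{3/2} + (1 − a²)·ρ^{1/2} ). In particular, the infimum of this expectation over unit vectors v equals (1+βσ²)/(1+βσ²+β‖Δ‖₂²)^{3/2}. -/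

import Mathlib

open Real MeasureTheory

open scoped RealInnerProductSpace

open Module (finrank)

/-!
Completing the square in `ε` averages the noise out: under `ε ∼ N(0, σ²)` the weight
`exp (-(β/2) (m + ε)²)` has mean `exp (-β m² / (2 (1 + βσ²))) / √(1 + βσ²)`. What remains is
`E[⟪x, v⟫² exp (-(κ/2) ⟪u, x⟫²)]` with `u = Δ / ‖Δ‖` and `κ = β‖Δ‖² / (1 + βσ²)`. In an orthonormal
basis whose first vector is `u` the integrand is a product of one-dimensional Gaussians with
variances `1/(1+κ), 1, …, 1`, the cross terms of `⟪x, v⟫²` are odd and vanish, and the result is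
`(‖v‖² - κ/(1+κ) ⟪u, v⟫²) / √(1+κ)`. This decreases in `⟪Δ, v⟫²`, so over unit vectors it is
smallest at `v = u`.
-/

theorem integral_mul_exp_neg_mul_sq_eq_zero (b : ℝ) : ∫ x : ℝ, x * exp (-b * x ^ 2) = 0 := by
  have h := integral_neg_eq_self (fun x : ℝ => x * exp (-b * x ^ 2)) volume
  simp only [neg_mul, neg_sq, integral_neg] at h ⊢
  linarith

theorem integral_sq_mul_exp_neg_mul_sq {b : ℝ} (hb : 0 < b) :
    ∫ x : ℝ, x ^ 2 * exp (-b * x ^ 2) = √(π / b) / (2 * b) := by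
  have hIoi : ∫ x in Set.Ioi (0 : ℝ), x ^ 2 * exp (-b * x ^ 2) = √π / (4 * b * √b) := by
    have h := integral_rpow_mul_exp_neg_mul_rpow (p := 2) (q := 2) two_pos (by norm_num) hb
    simp only [rpow_two] at h
    rw [h, show ((2 : ℝ) + 1) / 2 = 1 / 2 + 1 by norm_num, Gamma_add_one (by norm_num),
      Gamma_one_half_eq, show -((2 : ℝ) + 1) / 2 = -1 - 1 / 2 by norm_num, rpow_sub hb,
      rpow_neg_one, ← sqrt_eq_rpow]
    field_simp
    norm_num
  have h := integral_comp_abs (f := fun x => x ^ 2 * exp (-b * x ^ 2))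
  simp only [sq_abs] at h
  rw [h, hIoi, sqrt_div pi_pos.le]
  field_simp
  ring

-- For `a + b < 0` both sides are `0`: the integrand is not integrable and `√` of a negative is `0`.
theorem integral_exp_neg_mul_add_sq_mul_exp_neg_mul_sq {a b : ℝ} (hab : a + b ≠ 0) (m : ℝ) :
    ∫ t : ℝ, exp (-a * (m + t) ^ 2) * exp (-b * t ^ 2)
      = √(π / (a + b)) * exp (-(a * b / (a + b)) * m ^ 2) := by
  have hsq : ∀ t : ℝ, exp (-a * (m + t) ^ 2) * exp (-b * t ^ 2)
      = exp (-(a * b / (a + b)) * m ^ 2) * exp (-(a + b) * (t + a * m / (a + b)) ^ 2) := by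
    intro t
    rw [← exp_add, ← exp_add]
    congr 1
    field_simp
    ring
  simp only [hsq]
  rw [integral_const_mul, integral_add_right_eq_self (fun t => exp (-(a + b) * t ^ 2)),
    integral_gaussian, mul_comm]

section Coordinates

variable {ι : Type*} [Fintype ι] [DecidableEq ι] {p : ι → ℝ}

theorem mul_mul_exp_neg_sum_mul_sq_eq_prod (i j : ι) (y : ι → ℝ) :
    y i * y j * exp (-∑ k, p k * y k ^ 2)
      = ∏ k, (if k = i then y k else 1) * (if k = j then y k else 1) * exp (-p k * y k ^ 2) := by
  simp only [Finset.prod_mul_distrib, Finset.prod_ite_eq', Finset.mem_univ, if_true,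
    ← exp_sum, neg_mul, Finset.sum_neg_distrib]

theorem integrable_mul_mul_exp_neg_sum_mul_sq (hp : ∀ k, 0 < p k) (i j : ι) :
    Integrable fun y : ι → ℝ => y i * y j * exp (-∑ k, p k * y k ^ 2) := by
  simp only [mul_mul_exp_neg_sum_mul_sq_eq_prod i j]
  refine Integrable.fintype_prod (μ := fun _ => volume) (f := fun k t =>
    (if k = i then t else 1) * (if k = j then t else 1) * exp (-p k * t ^ 2)) fun k => ?_
  have h2 := integrable_rpow_mul_exp_neg_mul_sq (hp k) (s := 2) (by norm_num)
  simp only [rpow_two] at h2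
  split_ifs
  · simpa only [← sq] using h2
  · simpa using integrable_mul_exp_neg_mul_sq (hp k)
  · simpa using integrable_mul_exp_neg_mul_sq (hp k)
  · simpa using integrable_exp_neg_mul_sq (hp k)

theorem integral_mul_mul_exp_neg_sum_mul_sq (hp : ∀ k, 0 < p k) (i j : ι) :
    ∫ y : ι → ℝ, y i * y j * exp (-∑ k, p k * y k ^ 2)
      = if i = j then (∏ k, √(π / p k)) / (2 * p i) else 0 := by
  simp only [mul_mul_exp_neg_sum_mul_sq_eq_prod i j]
  refine (integral_fintype_prod_volume_eq_prod (𝕜 := ℝ) fun k t =>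
    (if k = i then t else 1) * (if k = j then t else 1) * exp (-p k * t ^ 2)).trans ?_
  split_ifs with hij
  · subst hij
    have hfactor : ∀ k, ∫ t : ℝ, (if k = i then t else 1) * (if k = i then t else 1) *
        exp (-p k * t ^ 2) = √(π / p k) * if k = i then (2 * p k)⁻¹ else 1 := by
      intro k
      split_ifs with hk
      · simp only [← sq, integral_sq_mul_exp_neg_mul_sq (hp k), div_eq_mul_inv]
      · simp only [one_mul, mul_one, integral_gaussian]
    simp only [hfactor, Finset.prod_mul_distrib, Finset.prod_ite_eq', Finset.mem_univ, if_true,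
      div_eq_mul_inv]
  · refine Finset.prod_eq_zero (Finset.mem_univ i) ?_
    simpa [hij] using integral_mul_exp_neg_mul_sq_eq_zero (p i)

theorem integral_sq_sum_mul_exp_neg_sum_mul_sq (hp : ∀ k, 0 < p k) (c : ι → ℝ) :
    ∫ y : ι → ℝ, (∑ i, c i * y i) ^ 2 * exp (-∑ k, p k * y k ^ 2)
      = (∏ k, √(π / p k)) * ∑ i, c i ^ 2 / (2 * p i) := by
  have hexpand : ∀ y : ι → ℝ, (∑ i, c i * y i) ^ 2 * exp (-∑ k, p k * y k ^ 2)
      = ∑ i, ∑ j, c i * c j * (y i * y j * exp (-∑ k, p k * y k ^ 2)) := by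
    intro y
    rw [sq, Finset.sum_mul_sum, Finset.sum_mul]
    refine Finset.sum_congr rfl fun i _ => ?_
    rw [Finset.sum_mul]
    exact Finset.sum_congr rfl fun j _ => by ring
  have hint := integrable_mul_mul_exp_neg_sum_mul_sq hp
  simp only [hexpand]
  rw [integral_finsetSum _ fun i _ => integrable_finsetSum _ fun j _ => (hint i j).const_mul _]
  simp only [integral_finsetSum _ fun j _ => (hint _ j).const_mul _, integral_const_mul,
    integral_mul_mul_exp_neg_sum_mul_sq hp, mul_ite, mul_zero, Finset.sum_ite_eq,
    Finset.mem_univ, if_true, Finset.mul_sum]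
  exact Finset.sum_congr rfl fun i _ => by ring

end Coordinates

theorem exists_orthonormalBasis_apply_eq {E : Type*} [NormedAddCommGroup E]
    [InnerProductSpace ℝ E] [FiniteDimensional ℝ E] {u : E} (hu : ‖u‖ = 1) :
    ∃ (s : Finset E) (b : OrthonormalBasis s ℝ E) (i : s), b i = u := by
  have hON : Orthonormal ℝ ((↑) : ({u} : Set E) → E) :=
    ⟨by rintro ⟨_, rfl⟩; exact hu, fun i j hij => (hij (Subsingleton.elim i j)).elim⟩
  obtain ⟨s, b, hus, hb⟩ := hON.exists_orthonormalBasis_extension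
  exact ⟨s, b, ⟨u, hus rfl⟩, by rw [hb]⟩

theorem OrthonormalBasis.integral_comp_inner {ι E F : Type*} [Fintype ι] [NormedAddCommGroup E]
    [InnerProductSpace ℝ E] [FiniteDimensional ℝ E] [MeasurableSpace E] [BorelSpace E]
    [NormedAddCommGroup F] [NormedSpace ℝ F] (b : OrthonormalBasis ι ℝ E) (f : (ι → ℝ) → F) :
    ∫ x : E, f (fun k => ⟪b k, x⟫) = ∫ y, f y := by
  have hcoord : ∀ x, (b.measurableEquiv.trans (MeasurableEquiv.toLp 2 (ι → ℝ)).symm) x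
      = fun k => ⟪b k, x⟫ := fun x => funext fun k => b.repr_apply_apply x k
  simpa only [hcoord] using (b.measurePreserving_measurableEquiv.trans
    (EuclideanSpace.volume_preserving_symm_measurableEquiv_toLp ι)).integral_comp' f

theorem integral_inner_sq_mul_exp_neg_norm_sq_sub_inner_sq {E : Type*} [NormedAddCommGroup E]
    [InnerProductSpace ℝ E] [FiniteDimensional ℝ E] [MeasurableSpace E] [BorelSpace E]
    {u : E} (hu : ‖u‖ = 1) (v : E) {κ : ℝ} (hκ : -1 < κ) :
    ∫ x : E, ⟪x, v⟫ ^ 2 * exp (-‖x‖ ^ 2 / 2 - κ / 2 * ⟪u, x⟫ ^ 2)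
      = √(2 * π) ^ finrank ℝ E / √(1 + κ) * (‖v‖ ^ 2 - κ / (1 + κ) * ⟪u, v⟫ ^ 2) := by
  classical
  obtain ⟨s, b, i₀, hbi₀⟩ := exists_orthonormalBasis_apply_eq hu
  set q : s → ℝ := fun k => if k = i₀ then 1 + κ else 1 with hq
  have hq_pos : ∀ k, 0 < q k := fun k => by
    simp only [hq]; split_ifs <;> linarith
  have hcoord : ∀ x : E, ⟪x, v⟫ ^ 2 * exp (-‖x‖ ^ 2 / 2 - κ / 2 * ⟪u, x⟫ ^ 2)
      = (∑ i, ⟪b i, v⟫ * ⟪b i, x⟫) ^ 2 * exp (-∑ k, q k / 2 * ⟪b k, x⟫ ^ 2) := by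
    intro x
    have hsplit : ∀ k, q k / 2 * ⟪b k, x⟫ ^ 2
        = ⟪b k, x⟫ ^ 2 / 2 + if k = i₀ then κ / 2 * ⟪b k, x⟫ ^ 2 else 0 := fun k => by
      simp only [hq]; split_ifs <;> ring
    rw [Finset.sum_congr rfl fun k _ => hsplit k, Finset.sum_add_distrib, ← Finset.sum_div,
      b.sum_sq_inner_right, Finset.sum_ite_eq', if_pos (Finset.mem_univ _), hbi₀,
      ← b.sum_inner_mul_inner, neg_add, ← sub_eq_add_neg, neg_div]
    simp only [real_inner_comm x, mul_comm]
  have hprod : ∏ k, √(π / (q k / 2)) = √(2 * π) ^ finrank ℝ E / √(1 + κ) := by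
    have hfactor : ∀ k, √(π / (q k / 2)) = √(2 * π) / √(q k) := fun k => by
      rw [div_div_eq_mul_div, mul_comm, sqrt_div (by positivity)]
    rw [Finset.prod_congr rfl fun k _ => hfactor k, Finset.prod_div_distrib, Finset.prod_const,
      Finset.card_univ, ← Module.finrank_eq_card_basis b.toBasis]
    simp only [hq, apply_ite Real.sqrt, sqrt_one, Finset.prod_ite_eq', Finset.mem_univ, if_true]
  have hsum : ∑ i, ⟪b i, v⟫ ^ 2 / (2 * (q i / 2)) = ‖v‖ ^ 2 - κ / (1 + κ) * ⟪u, v⟫ ^ 2 := by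
    have hsplit : ∀ i, ⟪b i, v⟫ ^ 2 / (2 * (q i / 2))
        = ⟪b i, v⟫ ^ 2 - if i = i₀ then κ / (1 + κ) * ⟪b i, v⟫ ^ 2 else 0 := fun i => by
      have h1 : 1 + κ ≠ 0 := by linarith
      simp only [hq]; split_ifs <;> field_simp <;> ring
    rw [Finset.sum_congr rfl fun i _ => hsplit i, Finset.sum_sub_distrib, b.sum_sq_inner_right,
      Finset.sum_ite_eq', if_pos (Finset.mem_univ _), hbi₀]
  simp only [hcoord]
  rw [b.integral_comp_inner fun y => (∑ i, ⟪b i, v⟫ * y i) ^ 2 * exp (-∑ k, q k / 2 * y k ^ 2),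
    integral_sq_sum_mul_exp_neg_sum_mul_sq fun k => half_pos (hq_pos k), hprod, hsum]

theorem gaussian_average_exp_neg_mul_add_sq {β σ : ℝ} (hσ : σ ≠ 0) (hβσ : 0 < 1 + β * σ ^ 2)
    (m : ℝ) :
    (2 * π * σ ^ 2) ^ (-(1 : ℝ) / 2) *
        ∫ ε : ℝ, exp (-(β / 2) * (m + ε) ^ 2) * exp (-ε ^ 2 / (2 * σ ^ 2))
      = exp (-(β / (1 + β * σ ^ 2) / 2) * m ^ 2) / √(1 + β * σ ^ 2) := by
  have hab : β / 2 + 1 / (2 * σ ^ 2) = (1 + β * σ ^ 2) / (2 * σ ^ 2) := by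
    field_simp
    ring
  have hnoise : ∀ ε : ℝ, exp (-ε ^ 2 / (2 * σ ^ 2)) = exp (-(1 / (2 * σ ^ 2)) * ε ^ 2) := by
    intro ε
    ring_nf
  simp only [hnoise]
  rw [integral_exp_neg_mul_add_sq_mul_exp_neg_mul_sq (by rw [hab]; positivity), hab,
    show (-(1 : ℝ) / 2) = -(1 / 2) by ring, rpow_neg (by positivity), ← sqrt_eq_rpow,
    div_div_eq_mul_div, sqrt_div (by positivity)]
  have : √(2 * π * σ ^ 2) ≠ 0 := by positivity
  field_simp

theorem rpow_neg_div_two_eq_inv_sqrt_pow {x : ℝ} (hx : 0 ≤ x) (n : ℕ) :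
    x ^ (-(n : ℝ) / 2) = (√x ^ n)⁻¹ := by
  rw [sqrt_eq_rpow, ← rpow_natCast, ← rpow_mul hx, ← rpow_neg hx]
  ring_nf

theorem gaussian_expectation_inner_sq_mul_exp_neg_mul_add_sq {E : Type*}
    [NormedAddCommGroup E] [InnerProductSpace ℝ E] [FiniteDimensional ℝ E] [MeasurableSpace E]
    [BorelSpace E] {β σ : ℝ} (hβ : 0 ≤ β) (hσ : σ ≠ 0) {Δ : E} (hΔ : Δ ≠ 0) (v : E) :
    (2 * π) ^ (-(finrank ℝ E : ℝ) / 2) *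
        ∫ x : E, exp (-‖x‖ ^ 2 / 2) * ((2 * π * σ ^ 2) ^ (-(1 : ℝ) / 2) *
          ∫ ε : ℝ, ⟪x, v⟫ ^ 2 * exp (-(β / 2) * (⟪Δ, x⟫ + ε) ^ 2) * exp (-ε ^ 2 / (2 * σ ^ 2)))
      = (‖v‖ ^ 2 - β * ⟪Δ, v⟫ ^ 2 / (1 + β * σ ^ 2 + β * ‖Δ‖ ^ 2))
          / √(1 + β * σ ^ 2 + β * ‖Δ‖ ^ 2) := by
  have hs : 0 < 1 + β * σ ^ 2 := by positivity
  have hD : 0 < 1 + β * σ ^ 2 + β * ‖Δ‖ ^ 2 := by positivity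
  have hΔn : 0 < ‖Δ‖ := norm_pos_iff.mpr hΔ
  set κ := β * ‖Δ‖ ^ 2 / (1 + β * σ ^ 2) with hκ
  have h1κ : 1 + κ = (1 + β * σ ^ 2 + β * ‖Δ‖ ^ 2) / (1 + β * σ ^ 2) := by
    rw [hκ]
    field_simp
  have hu : ‖‖Δ‖⁻¹ • Δ‖ = 1 := norm_smul_inv_norm hΔ
  have hinner : ∀ x, ⟪‖Δ‖⁻¹ • Δ, x⟫ = ⟪Δ, x⟫ / ‖Δ‖ := fun x => by
    rw [real_inner_smul_left, inv_mul_eq_div]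
  have hnoise : ∀ x : E, exp (-‖x‖ ^ 2 / 2) * ((2 * π * σ ^ 2) ^ (-(1 : ℝ) / 2) *
        ∫ ε : ℝ, ⟪x, v⟫ ^ 2 * exp (-(β / 2) * (⟪Δ, x⟫ + ε) ^ 2) * exp (-ε ^ 2 / (2 * σ ^ 2)))
      = (√(1 + β * σ ^ 2))⁻¹ * (⟪x, v⟫ ^ 2
          * exp (-‖x‖ ^ 2 / 2 - κ / 2 * ⟪‖Δ‖⁻¹ • Δ, x⟫ ^ 2)) := by
    intro x
    simp only [mul_assoc (⟪x, v⟫ ^ 2), integral_const_mul]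
    rw [mul_left_comm _ (⟪x, v⟫ ^ 2), gaussian_average_exp_neg_mul_add_sq hσ hs, sub_eq_add_neg,
      exp_add, hinner, hκ]
    field_simp
  simp only [hnoise]
  rw [integral_const_mul, integral_inner_sq_mul_exp_neg_norm_sq_sub_inner_sq hu v
      (by linarith [show 0 ≤ κ by positivity]),
    rpow_neg_div_two_eq_inv_sqrt_pow two_pi_pos.le, hinner, h1κ, sqrt_div hD.le, hκ]
  have : √(2 * π) ^ finrank ℝ E ≠ 0 := by positivity
  field_simp

theorem iInf_norm_eq_one_comp_inner_sq {E : Type*} [NormedAddCommGroup E] [InnerProductSpace ℝ E]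
    {Δ : E} (hΔ : Δ ≠ 0) {f : ℝ → ℝ} (hf : Antitone f) :
    ⨅ v : {v : E // ‖v‖ = 1}, f (⟪Δ, v⟫ ^ 2) = f (‖Δ‖ ^ 2) := by
  have hu : ‖‖Δ‖⁻¹ • Δ‖ = 1 := norm_smul_inv_norm hΔ
  have : Nonempty {v : E // ‖v‖ = 1} := ⟨⟨_, hu⟩⟩
  refine IsGLB.ciInf_eq (IsLeast.isGLB (s := Set.range _) ⟨⟨⟨_, hu⟩, ?_⟩, ?_⟩)
  · have hΔ' : ‖Δ‖ ≠ 0 := norm_ne_zero_iff.mpr hΔ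
    simp only [real_inner_smul_right, real_inner_self_eq_norm_sq]
    field_simp
  · rintro _ ⟨⟨v, hv⟩, rfl⟩
    refine hf ?_
    have h := abs_real_inner_le_norm Δ v
    rw [hv, mul_one] at h
    simpa only [sq_abs] using pow_le_pow_left₀ (abs_nonneg _) h 2

theorem rpow_three_halves {x : ℝ} (hx : 0 ≤ x) : x ^ ((3 : ℝ) / 2) = x * √x := by
  rw [show (3 : ℝ) / 2 = 1 / 2 + 1 by norm_num, rpow_add_one' hx (by norm_num), ← sqrt_eq_rpow,
    mul_comm]

theorem stmt8_general
    {d : ℕ} (β σ : ℝ) (hβ : 0 < β) (hσ : 0 < σ)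
    (Δ : EuclideanSpace ℝ (Fin d)) (hΔ : Δ ≠ 0) :
    (∀ v : EuclideanSpace ℝ (Fin d), ‖v‖ = 1 →
      (2 * π) ^ (-(d : ℝ) / 2) *
        ∫ x : EuclideanSpace ℝ (Fin d),
          (Real.exp (-‖x‖ ^ 2 / 2) * ((2 * π * σ ^ 2) ^ (-(1 : ℝ) / 2) *
            ∫ ε : ℝ, ⟪x, v⟫ ^ 2 * Real.exp (-(β / 2) * (⟪Δ, x⟫ + ε) ^ 2) *
              Real.exp (-ε ^ 2 / (2 * σ ^ 2))))
      = (1 / Real.sqrt (1 + β * σ ^ 2)) *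
          ((⟪Δ, v⟫ / ‖Δ‖) ^ 2 *
              ((1 + β * σ ^ 2) / (1 + β * (σ ^ 2 + ‖Δ‖ ^ 2))) ^ ((3 : ℝ) / 2)
            + (1 - (⟪Δ, v⟫ / ‖Δ‖) ^ 2) *
              ((1 + β * σ ^ 2) / (1 + β * (σ ^ 2 + ‖Δ‖ ^ 2))) ^ ((1 : ℝ) / 2))) ∧
    (⨅ v : {v : EuclideanSpace ℝ (Fin d) // ‖v‖ = 1},
      (2 * π) ^ (-(d : ℝ) / 2) *
        ∫ x : EuclideanSpace ℝ (Fin d),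
          (Real.exp (-‖x‖ ^ 2 / 2) * ((2 * π * σ ^ 2) ^ (-(1 : ℝ) / 2) *
            ∫ ε : ℝ, ⟪x, (v : EuclideanSpace ℝ (Fin d))⟫ ^ 2 *
              Real.exp (-(β / 2) * (⟪Δ, x⟫ + ε) ^ 2) *
              Real.exp (-ε ^ 2 / (2 * σ ^ 2)))))
      = (1 + β * σ ^ 2) / (1 + β * σ ^ 2 + β * ‖Δ‖ ^ 2) ^ ((3 : ℝ) / 2) := by
  have hs : 0 < 1 + β * σ ^ 2 := by positivity
  have hD : 0 < 1 + β * σ ^ 2 + β * ‖Δ‖ ^ 2 := by positivity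
  have hΔn : ‖Δ‖ ≠ 0 := norm_ne_zero_iff.mpr hΔ
  have hmoment := fun v : EuclideanSpace ℝ (Fin d) =>
    gaussian_expectation_inner_sq_mul_exp_neg_mul_add_sq hβ.le hσ.ne' hΔ v
  simp only [finrank_euclideanSpace_fin] at hmoment
  refine ⟨fun v hv => ?_, ?_⟩
  · rw [hmoment, hv, show 1 + β * (σ ^ 2 + ‖Δ‖ ^ 2) = 1 + β * σ ^ 2 + β * ‖Δ‖ ^ 2 by ring,
      rpow_three_halves (div_pos hs hD).le, ← sqrt_eq_rpow, sqrt_div hs.le]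
    field_simp
    ring
  · have hanti : Antitone fun t => (1 ^ 2 - β * t / (1 + β * σ ^ 2 + β * ‖Δ‖ ^ 2))
        / √(1 + β * σ ^ 2 + β * ‖Δ‖ ^ 2) := fun a b hab => by
      dsimp only
      gcongr
    conv_lhs => enter [1, v]; rw [hmoment, v.2]
    rw [iInf_norm_eq_one_comp_inner_sq hΔ hanti, rpow_three_halves hD.le]
    field_simp
    ring

/-- Gaussian expectation identity for the LWSC constant of robust least squares regression
with Gaussian label noise of variance `σ²`: for independent `x ∼ N(0, I_d)`, `ε ∼ N(0, σ²)`,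
nonzero `Δ` and a unit vector `v` with `a = ⟨Δ,v⟩/‖Δ‖`, `ρ = (1+βσ²)/(1+β(σ²+‖Δ‖²))`,
`E[⟨x,v⟩²·exp(−(β/2)(⟨Δ,x⟩+ε)²)] = (1/√(1+βσ²))·(a²ρ^{3/2} + (1−a²)ρ^{1/2})`, and the
infimum over unit vectors equals `(1+βσ²)/(1+βσ²+β‖Δ‖²)^{3/2}`. -/
theorem stmt8
    {d : ℕ} (hd : 1 ≤ d) (β σ : ℝ) (hβ : 0 < β) (hσ : 0 < σ)
    (Δ : EuclideanSpace ℝ (Fin d)) (hΔ : Δ ≠ 0) :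
    (∀ v : EuclideanSpace ℝ (Fin d), ‖v‖ = 1 →
      (2 * π) ^ (-(d : ℝ) / 2) *
        ∫ x : EuclideanSpace ℝ (Fin d),
          (Real.exp (-‖x‖ ^ 2 / 2) * ((2 * π * σ ^ 2) ^ (-(1 : ℝ) / 2) *
            ∫ ε : ℝ, ⟪x, v⟫ ^ 2 * Real.exp (-(β / 2) * (⟪Δ, x⟫ + ε) ^ 2) *
              Real.exp (-ε ^ 2 / (2 * σ ^ 2))))
      = (1 / Real.sqrt (1 + β * σ ^ 2)) *
          ((⟪Δ, v⟫ / ‖Δ‖) ^ 2 *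
              ((1 + β * σ ^ 2) / (1 + β * (σ ^ 2 + ‖Δ‖ ^ 2))) ^ ((3 : ℝ) / 2)
            + (1 - (⟪Δ, v⟫ / ‖Δ‖) ^ 2) *
              ((1 + β * σ ^ 2) / (1 + β * (σ ^ 2 + ‖Δ‖ ^ 2))) ^ ((1 : ℝ) / 2))) ∧
    (⨅ v : {v : EuclideanSpace ℝ (Fin d) // ‖v‖ = 1},
      (2 * π) ^ (-(d : ℝ) / 2) *
        ∫ x : EuclideanSpace ℝ (Fin d),
          (Real.exp (-‖x‖ ^ 2 / 2) * ((2 * π * σ ^ 2) ^ (-(1 : ℝ) / 2) *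
            ∫ ε : ℝ, ⟪x, (v : EuclideanSpace ℝ (Fin d))⟫ ^ 2 *
              Real.exp (-(β / 2) * (⟪Δ, x⟫ + ε) ^ 2) *
              Real.exp (-ε ^ 2 / (2 * σ ^ 2)))))
      = (1 + β * σ ^ 2) / (1 + β * σ ^ 2 + β * ‖Δ‖ ^ 2) ^ ((3 : ℝ) / 2) :=
  stmt8_general β σ hβ hσ Δ hΔ
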